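/- The key lemma: epi_s φ_𝓗 ⊆ 𝓐_𝓗 ⊆ epi φ_𝓗 ⊆ epi (f + δ_E)^*, where φ_𝓗(x*) := inf_{H∈𝓗, μ∈ℝ₊^H} (f + ∑_{t∈H} μ_t f_t)^*(x*), 𝓐_𝓗 := ⋃_{H∈𝓗, μ∈ℝ₊^H} epi (f + ∑_{t∈H} μ_t f_t)^*, and E = ⋂_{t∈T}{f_t ≤ 0}. -/

import Mathlib

open scoped BigOperators Pointwise
open Classical

/-- Fenchel–Legendre conjugate of an extended-real-valued function,
evaluated on the weak* dual. -/
noncomputable def conjFn {X : Type*} [AddCommGroup X] [Module ℝ X] [TopologicalSpace X]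
    (g : X → EReal) (p : WeakDual ℝ X) : EReal :=
  ⨆ x : X, ((p x : ℝ) : EReal) - g x

/-- The Lagrangian `f + ∑_{t ∈ H} μ t • f_t` (with values in the extended reals,
using the convention `0 * (+∞) = 0`). -/
noncomputable def lagFn {X T : Type*} (f : X → EReal) (ft : T → X → EReal)
    (H : Finset T) (μ : T → ℝ) : X → EReal :=
  fun x => f x + ∑ t ∈ H, ((μ t : EReal) * ft t x)

/-- `f + δ_E`, where `E = ⋂_{t ∈ T} {f_t ≤ 0}`. -/
noncomputable def fPlusIndicator {X T : Type*} (f : X → EReal) (ft : T → X → EReal) :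
    X → EReal :=
  fun x => if ∀ t : T, ft t x ≤ 0 then f x else ⊤

/-- The epigraph (inside `X* × ℝ`) of the conjugate of `g`. -/
def epiConj {X : Type*} [AddCommGroup X] [Module ℝ X] [TopologicalSpace X]
    (g : X → EReal) : Set (WeakDual ℝ X × ℝ) :=
  {q | conjFn g q.1 ≤ (q.2 : EReal)}

/-- The set `𝓐_𝓗 = ⋃_{H ∈ 𝓗} ⋃_{μ ∈ ℝ₊^H} epi (f + ∑_{t∈H} μ_t f_t)^*`. -/
def ASet {X T : Type*} [AddCommGroup X] [Module ℝ X] [TopologicalSpace X]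
    (f : X → EReal) (ft : T → X → EReal) (𝓗 : Set (Finset T)) :
    Set (WeakDual ℝ X × ℝ) :=
  {q | ∃ H ∈ 𝓗, ∃ μ : T → ℝ, (∀ t ∈ H, 0 ≤ μ t) ∧ q ∈ epiConj (lagFn f ft H μ)}

/-- The convex cone generated by a set: `cone A = ℝ≥0 • (co A)`. -/
def coneGen {M : Type*} [AddCommMonoid M] [Module ℝ M] (A : Set M) : Set M :=
  {p | ∃ c : ℝ, 0 ≤ c ∧ ∃ q ∈ convexHull ℝ A, p = c • q}

/-- `φ_𝓗(x*) = inf_{H ∈ 𝓗, μ ∈ ℝ₊^H} (f + ∑_{t∈H} μ_t f_t)^*(x*)`. -/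
noncomputable def phiH {X T : Type*} [AddCommGroup X] [Module ℝ X] [TopologicalSpace X]
    (f : X → EReal) (ft : T → X → EReal) (𝓗 : Set (Finset T)) (p : WeakDual ℝ X) : EReal :=
  ⨅ H ∈ 𝓗, ⨅ μ : {μ : T → ℝ // ∀ t ∈ H, 0 ≤ μ t}, conjFn (lagFn f ft H μ.1) p

theorem conjFn_anti {X : Type*} [AddCommGroup X] [Module ℝ X] [TopologicalSpace X]
    {g h : X → EReal} (hgh : g ≤ h) (p : WeakDual ℝ X) : conjFn h p ≤ conjFn g p :=
  iSup_mono fun x => EReal.sub_le_sub le_rfl (hgh x)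

section Lagrangian

variable {X T : Type*} (f : X → EReal) (ft : T → X → EReal)

theorem lagFn_le_fPlusIndicator {H : Finset T} {μ : T → ℝ} (hμ : ∀ t ∈ H, 0 ≤ μ t) :
    lagFn f ft H μ ≤ fPlusIndicator f ft := by
  intro x
  unfold lagFn fPlusIndicator
  split_ifs with hE
  · have hsum : ∑ t ∈ H, (μ t : EReal) * ft t x ≤ 0 :=
      Finset.sum_nonpos fun t ht =>
        mul_nonpos_of_nonneg_of_nonpos (EReal.coe_nonneg.2 (hμ t ht)) (hE t)
    simpa using add_le_add_right hsum (f x)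
  · exact le_top

variable [AddCommGroup X] [Module ℝ X] [TopologicalSpace X] {𝓗 : Set (Finset T)}

theorem phiH_le_conjFn_lagFn {H : Finset T} (hH : H ∈ 𝓗) {μ : T → ℝ}
    (hμ : ∀ t ∈ H, 0 ≤ μ t) (p : WeakDual ℝ X) :
    phiH f ft 𝓗 p ≤ conjFn (lagFn f ft H μ) p :=
  (iInf₂_le H hH).trans (iInf_le_of_le ⟨μ, hμ⟩ le_rfl)

theorem phiH_lt_iff {p : WeakDual ℝ X} {r : EReal} :
    phiH f ft 𝓗 p < r ↔
      ∃ H ∈ 𝓗, ∃ μ : T → ℝ, (∀ t ∈ H, 0 ≤ μ t) ∧ conjFn (lagFn f ft H μ) p < r := by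
  simp only [phiH, iInf_lt_iff, exists_prop, Subtype.exists]

theorem conjFn_fPlusIndicator_le_phiH (p : WeakDual ℝ X) :
    conjFn (fPlusIndicator f ft) p ≤ phiH f ft 𝓗 p :=
  le_iInf₂ fun _ _ => le_iInf fun μ => conjFn_anti (lagFn_le_fPlusIndicator f ft μ.2) p

end Lagrangian

theorem key_inclusions_general {X T : Type*} [AddCommGroup X] [Module ℝ X] [TopologicalSpace X]
    (f : X → EReal) (ft : T → X → EReal)
    (𝓗 : Set (Finset T)) :
    {q : WeakDual ℝ X × ℝ | phiH f ft 𝓗 q.1 < (q.2 : EReal)} ⊆ ASet f ft 𝓗 ∧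
      ASet f ft 𝓗 ⊆ {q : WeakDual ℝ X × ℝ | phiH f ft 𝓗 q.1 ≤ (q.2 : EReal)} ∧
      {q : WeakDual ℝ X × ℝ | phiH f ft 𝓗 q.1 ≤ (q.2 : EReal)} ⊆
        epiConj (fPlusIndicator f ft) := by
  refine ⟨fun q hq => ?_, ?_, fun q hq => (conjFn_fPlusIndicator_le_phiH f ft q.1).trans hq⟩
  · obtain ⟨H, hH, μ, hμ, hlt⟩ := (phiH_lt_iff f ft).1 hq
    exact ⟨H, hH, μ, hμ, hlt.le⟩
  · rintro q ⟨H, hH, μ, hμ, hq⟩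
    exact (phiH_le_conjFn_lagFn f ft hH hμ q.1).trans hq

theorem key_inclusions {X T : Type*} [AddCommGroup X] [Module ℝ X] [TopologicalSpace X]
    (f : X → EReal) (ft : T → X → EReal)
    (hf : ∀ x, f x ≠ ⊥) (hfprop : ∃ x, f x ≠ ⊤)
    (hft : ∀ t x, ft t x ≠ ⊥) (hftprop : ∀ t, ∃ x, ft t x ≠ ⊤)
    (𝓗 : Set (Finset T)) (h𝓗ne : 𝓗.Nonempty) (h𝓗mem : ∀ H ∈ 𝓗, H.Nonempty) :
    {q : WeakDual ℝ X × ℝ | phiH f ft 𝓗 q.1 < (q.2 : EReal)} ⊆ ASet f ft 𝓗 ∧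
      ASet f ft 𝓗 ⊆ {q : WeakDual ℝ X × ℝ | phiH f ft 𝓗 q.1 ≤ (q.2 : EReal)} ∧
      {q : WeakDual ℝ X × ℝ | phiH f ft 𝓗 q.1 ≤ (q.2 : EReal)} ⊆
        epiConj (fPlusIndicator f ft) :=
  key_inclusions_general f ft 𝓗
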